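/- For the Matérn spectral density κ̂_d(r) = σ² 2^d π^{d/2} (2ν)^ν (Γ(ν+d/2)/Γ(ν)) (2ν + (2πr)²)^{−(ν+d/2)}, and for the ordering k(1), k(2), … of ℤ^d by nondecreasing Euclidean norm, the values ρ̂(ξ_{k(j)}) with ξ_k = k/(2ℓ) satisfy 0 < ρ̂(ξ_{k(j)}) ≤ C λ^{−2ν} (νℓ²)^{ν+d/2} j^{−(1+2ν/d)} for all j ≥ 2, where C depends only on d. -/

import Mathlib

/-!
Write `α = ν + d/2` and `r = ‖k j‖`. Log-convexity of `Γ` gives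
`Γ(ν + d/2) / Γ(ν) ≤ ((d+1)ν)^(d/2)`, hence `κ̂_d(ρ) ≤ (2π(d+1))^(d/2) (2ν / (2ν + (2πρ)²))^α`.
The `j + 1` distinct lattice points `k 0, …, k j` lie in the cube `[-r, r]^d`, so
`M = (j+1)^(1/d) ≤ 2r + 1`, and the right-hand side of the claim is `C λ^d (ν/u)^α` with
`u = (λM/ℓ)²`. For `r ≥ 5` the term `(πλr/ℓ)²` exceeds `2u`, which gives the bound outright;
for `r < 5` we have `u ≤ 121`, and then `(ν/u)^α` is bounded below uniformly in `ν ≥ 1/2`.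
-/

/-- Matérn spectral density (σ² = 1):
κ̂_d(r) = 2^d π^{d/2} (2ν)^ν (Γ(ν+d/2)/Γ(ν)) (2ν + (2πr)²)^{-(ν+d/2)}. -/
noncomputable def maternHat (d : ℕ) (ν r : ℝ) : ℝ :=
  2 ^ d * Real.pi ^ ((d : ℝ) / 2) * (2 * ν) ^ ν *
    (Real.Gamma (ν + (d : ℝ) / 2) / Real.Gamma ν) *
    (2 * ν + (2 * Real.pi * r) ^ 2) ^ (-(ν + (d : ℝ) / 2))

open Real Finset Function

theorem Real.Gamma_add_le_mul_rpow_of_le_one {x t : ℝ} (hx : 0 < x) (ht0 : 0 ≤ t)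
    (ht1 : t ≤ 1) :
    Gamma (x + t) ≤ Gamma x * x ^ t := by
  rcases ht0.eq_or_lt with rfl | ht0
  · simp
  rcases ht1.eq_or_lt with rfl | ht1
  · rw [Gamma_add_one hx.ne', rpow_one, mul_comm]
  have hΓ := Gamma_pos_of_pos hx
  have h := Gamma_mul_add_mul_le_rpow_Gamma_mul_rpow_Gamma hx (by linarith : 0 < x + 1)
    (sub_pos.2 ht1) ht0 (by ring)
  rw [show (1 - t) * x + t * (x + 1) = x + t by ring, Gamma_add_one hx.ne',
    mul_rpow hx.le hΓ.le] at h
  calc Gamma (x + t) ≤ Gamma x ^ (1 - t) * (x ^ t * Gamma x ^ t) := h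
    _ = Gamma x * x ^ t := by
      rw [mul_left_comm, ← rpow_add hΓ, sub_add_cancel, rpow_one, mul_comm]

theorem Real.Gamma_add_le_mul_rpow {x s : ℝ} (hx : 0 < x) (hs : 0 ≤ s) :
    Gamma (x + s) ≤ Gamma x * (x + s) ^ s := by
  have hΓ := Gamma_pos_of_pos hx
  obtain ⟨n, hn⟩ := exists_nat_ge s
  induction n generalizing s with
  | zero =>
    obtain rfl : s = 0 := le_antisymm (by simpa using hn) hs
    simp
  | succ n ih =>
    rcases le_or_gt s 1 with hs1 | hs1
    · exact (Gamma_add_le_mul_rpow_of_le_one hx hs hs1).trans <|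
        mul_le_mul_of_nonneg_left (rpow_le_rpow hx.le (by linarith) hs) hΓ.le
    have hy : 0 < x + (s - 1) := by linarith
    have hrec : Gamma (x + (s - 1)) ≤ Gamma x * (x + s) ^ (s - 1) :=
      (ih (by linarith) (by push_cast at hn; linarith)).trans <|
        mul_le_mul_of_nonneg_left (rpow_le_rpow hy.le (by linarith) (by linarith)) hΓ.le
    calc Gamma (x + s) = (x + (s - 1)) * Gamma (x + (s - 1)) := by
          rw [← Gamma_add_one hy.ne', add_assoc, sub_add_cancel]
      _ ≤ (x + s) * (Gamma x * (x + s) ^ (s - 1)) :=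
          mul_le_mul (by linarith) hrec (Gamma_pos_of_pos hy).le (by linarith)
      _ = Gamma x * (x + s) ^ s := by
          rw [rpow_sub_one (by linarith)]; field_simp

theorem Real.Gamma_add_div_Gamma_le {ν c : ℝ} (hν : 1 / 2 ≤ ν) (hc : 0 ≤ c) :
    Gamma (ν + c) / Gamma ν ≤ ((2 * c + 1) * ν) ^ c := by
  have hν0 : 0 < ν := by linarith
  rw [div_le_iff₀ (Gamma_pos_of_pos hν0), mul_comm]
  refine (Gamma_add_le_mul_rpow hν0 hc).trans ?_
  gcongr
  nlinarith

theorem maternHat_pos (d : ℕ) {ν : ℝ} (hν : 0 < ν) (ρ : ℝ) : 0 < maternHat d ν ρ := by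
  have := Gamma_pos_of_pos hν
  have := Gamma_pos_of_pos (show 0 < ν + (d : ℝ) / 2 by positivity)
  unfold maternHat
  positivity

theorem maternHat_le (d : ℕ) {ν : ℝ} (hν : 1 / 2 ≤ ν) (ρ : ℝ) :
    maternHat d ν ρ ≤
      (2 * π * (d + 1)) ^ ((d : ℝ) / 2) *
        (2 * ν / (2 * ν + (2 * π * ρ) ^ 2)) ^ (ν + (d : ℝ) / 2) := by
  have hν0 : 0 < ν := by linarith
  set X := (2 * π * ρ) ^ 2
  have hX : 0 < 2 * ν + X := by positivity
  calc maternHat d ν ρ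
      ≤ 2 ^ d * π ^ ((d : ℝ) / 2) * (2 * ν) ^ ν * ((d + 1) * ν) ^ ((d : ℝ) / 2) *
          (2 * ν + X) ^ (-(ν + (d : ℝ) / 2)) := by
        unfold maternHat
        gcongr
        simpa only [show 2 * ((d : ℝ) / 2) + 1 = d + 1 by ring] using
          Gamma_add_div_Gamma_le hν (by positivity : (0 : ℝ) ≤ d / 2)
    _ = (2 * π * (d + 1)) ^ ((d : ℝ) / 2) * (2 * ν / (2 * ν + X)) ^ (ν + (d : ℝ) / 2) := by
        have h2 : (2 : ℝ) ^ d = 2 ^ ((d : ℝ) / 2) * 2 ^ ((d : ℝ) / 2) := by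
          rw [← rpow_add two_pos, add_halves, rpow_natCast]
        rw [div_rpow (by positivity) hX.le, rpow_neg hX.le,
          rpow_add (by positivity : (0 : ℝ) < 2 * ν), mul_rpow zero_le_two hν0.le,
          mul_rpow zero_le_two hν0.le, mul_rpow (by positivity : (0 : ℝ) ≤ d + 1) hν0.le,
          mul_rpow (by positivity : (0 : ℝ) ≤ 2 * π) (by positivity),
          mul_rpow zero_le_two pi_pos.le, h2]
        ring

theorem div_le_div_of_two_mul_le {ν u X : ℝ} (hν : 0 ≤ ν) (hu : 0 < u) (hX : 2 * u ≤ X) :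
    2 * ν / (2 * ν + X) ≤ ν / u := by
  rw [div_le_div_iff₀ (by linarith) hu]
  nlinarith

theorem one_le_rpow_mul_div_rpow {ν u a c : ℝ} (hν : 1 / 2 ≤ ν) (hu : 0 < u) (hua : u ≤ a)
    (ha : 1 / 2 ≤ a) (hc : 0 ≤ c) : 1 ≤ (2 * a) ^ (a + c) * (ν / u) ^ (ν + c) := by
  rcases le_or_gt a ν with haν | hνa
  · exact one_le_mul_of_one_le_of_one_le (one_le_rpow (by linarith) (by linarith))
      (one_le_rpow ((one_le_div hu).2 (by linarith)) (by linarith))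
  have ha0 : 0 < 2 * a := by linarith
  calc (1 : ℝ) = (2 * a) ^ (a + c) * (1 / (2 * a)) ^ (a + c) := by
        rw [← mul_rpow ha0.le (by positivity), mul_one_div_cancel ha0.ne', one_rpow]
    _ ≤ (2 * a) ^ (a + c) * (1 / (2 * a)) ^ (ν + c) :=
        mul_le_mul_of_nonneg_left (rpow_le_rpow_of_exponent_ge (by positivity)
          ((div_le_one ha0).2 (by linarith)) (by linarith)) (by positivity)
    _ ≤ (2 * a) ^ (a + c) * (ν / u) ^ (ν + c) := by
        refine mul_le_mul_of_nonneg_left (rpow_le_rpow (by positivity) ?_ (by linarith))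
          (by positivity)
        rw [div_le_div_iff₀ ha0 hu]
        nlinarith

theorem two_mul_sq_le_pi_mul_sq {r : ℝ} (hr : 5 ≤ r) : 2 * (2 * r + 1) ^ 2 ≤ (π * r) ^ 2 := by
  have hπ : 3.14 ^ 2 * r ^ 2 ≤ (π * r) ^ 2 := by
    rw [mul_pow]
    gcongr
    exact pi_gt_d2.le
  nlinarith

/-- The constant `121 = 11²` bounds `(s * M) ^ 2` when `r < 5`. -/
theorem rpow_two_mul_div_le {ν c r s M : ℝ} (hν : 1 / 2 ≤ ν) (hc : 0 ≤ c) (hr : 0 ≤ r)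
    (hs0 : 0 < s) (hs1 : s ≤ 1) (hM0 : 0 < M) (hM : M ≤ 2 * r + 1) :
    (2 * ν / (2 * ν + (π * s * r) ^ 2)) ^ (ν + c) ≤
      (2 * 121) ^ (121 + c) * (ν / (s * M) ^ 2) ^ (ν + c) := by
  have hu : 0 < (s * M) ^ 2 := by positivity
  have hsM : (s * M) ^ 2 ≤ (2 * r + 1) ^ 2 := by
    gcongr
    nlinarith
  rcases le_or_gt 5 r with hr5 | hr5
  · calc (2 * ν / (2 * ν + (π * s * r) ^ 2)) ^ (ν + c)
        ≤ (ν / (s * M) ^ 2) ^ (ν + c) := by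
          refine rpow_le_rpow (by positivity) ?_ (by linarith)
          apply div_le_div_of_two_mul_le (by linarith) hu
          have := two_mul_sq_le_pi_mul_sq hr5
          rw [show (π * s * r) ^ 2 = s ^ 2 * (π * r) ^ 2 by ring, mul_pow]
          nlinarith [mul_le_mul_of_nonneg_left this (sq_nonneg s),
            mul_le_mul_of_nonneg_left (pow_le_pow_left₀ hM0.le hM 2) (sq_nonneg s)]
      _ ≤ (2 * 121) ^ (121 + c) * (ν / (s * M) ^ 2) ^ (ν + c) :=
          le_mul_of_one_le_left (by positivity) (one_le_rpow (by norm_num) (by linarith))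
  · calc (2 * ν / (2 * ν + (π * s * r) ^ 2)) ^ (ν + c) ≤ 1 :=
          rpow_le_one (by positivity) ((div_le_one (by positivity)).2 (by nlinarith))
          (by linarith)
      _ ≤ (2 * 121) ^ (121 + c) * (ν / (s * M) ^ 2) ^ (ν + c) :=
          one_le_rpow_mul_div_rpow hν hu (by nlinarith) (by norm_num) hc

theorem rpow_decay_eq_pow_mul_rpow_div {d : ℕ} (hd : d ≠ 0) {lam ℓ ν N : ℝ} (hlam : 0 < lam)
    (hℓ : 0 < ℓ) (hν : 0 < ν) (hN : 0 < N) :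
    lam ^ (-(2 * ν)) * (ν * ℓ ^ 2) ^ (ν + (d : ℝ) / 2) * N ^ (-(1 + 2 * ν / d)) =
      lam ^ d * (ν / (lam / ℓ * N ^ ((d : ℝ)⁻¹)) ^ 2) ^ (ν + (d : ℝ) / 2) := by
  have hd0 : (d : ℝ) ≠ 0 := Nat.cast_ne_zero.2 hd
  apply log_injOn_pos (Set.mem_Ioi.2 (by positivity)) (Set.mem_Ioi.2 (by positivity))
  rw [log_mul (by positivity) (by positivity), log_mul (by positivity) (by positivity),
    log_mul (by positivity) (by positivity), log_rpow hlam, log_rpow (by positivity),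
    log_rpow hN, log_rpow (by positivity), log_pow, log_mul hν.ne' (by positivity),
    log_div hν.ne' (by positivity), log_pow, log_pow, log_mul (by positivity) (by positivity),
    log_div hlam.ne' hℓ.ne', log_rpow hN]
  field_simp
  ring

theorem card_le_of_sqrt_sum_sq_le {d : ℕ} (S : Finset (Fin d → ℤ)) {r : ℝ} (hr : 0 ≤ r)
    (hS : ∀ x ∈ S, √(∑ i, (x i : ℝ) ^ 2) ≤ r) : (#S : ℝ) ≤ (2 * r + 1) ^ d := by
  set m := ⌊r⌋
  have hm : 0 ≤ m := Int.floor_nonneg.2 hr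
  have hsub : S ⊆ Fintype.piFinset fun _ => Icc (-m) m := by
    intro x hx
    refine Fintype.mem_piFinset.2 fun i => mem_Icc.2 (abs_le.1 (Int.le_floor.2 ?_))
    push_cast
    exact (abs_le_sqrt (single_le_sum (fun i _ => sq_nonneg (x i : ℝ)) (mem_univ i))).trans
      (hS x hx)
  calc (#S : ℝ) ≤ #(Fintype.piFinset fun _ : Fin d => Icc (-m) m) := by
        exact_mod_cast card_le_card hsub
    _ = (2 * m + 1) ^ d := by
        rw [Fintype.card_piFinset, prod_const, card_univ, Fintype.card_fin, Int.card_Icc,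
          show m + 1 - -m = 2 * m + 1 by ring, Nat.cast_pow, ← Int.cast_natCast,
          Int.toNat_of_nonneg (by omega)]
        push_cast
        rfl
    _ ≤ (2 * r + 1) ^ d :=
        pow_le_pow_left₀ (by positivity) (by linarith [Int.floor_le r]) d

theorem succ_le_of_monotone_sqrt_sum_sq {d : ℕ} {k : ℕ → Fin d → ℤ} (hk : Injective k)
    (hmono : Monotone fun j => √(∑ i, (k j i : ℝ) ^ 2)) (j : ℕ) :
    ((j + 1 : ℕ) : ℝ) ≤ (2 * √(∑ i, (k j i : ℝ) ^ 2) + 1) ^ d := by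
  have := card_le_of_sqrt_sum_sq_le ((range (j + 1)).image k)
    (r := √(∑ i, (k j i : ℝ) ^ 2)) (sqrt_nonneg _) <| by
    simp only [mem_image, mem_range, forall_exists_index, and_imp, forall_apply_eq_imp_iff₂]
    exact fun i hi => hmono (by omega)
  rwa [card_image_of_injective _ hk, card_range] at this

theorem stmt18 (d : ℕ) (hd : 1 ≤ d) :
    ∃ C : ℝ, 0 < C ∧
      ∀ ν : ℝ, 1 / 2 ≤ ν → ∀ lam : ℝ, 0 < lam → lam ≤ 1 → ∀ ℓ : ℝ, 1 ≤ ℓ →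
      ∀ k : ℕ → (Fin d → ℤ), Function.Bijective k → k 0 = 0 →
        (Monotone fun j => Real.sqrt (∑ i, ((k j i : ℝ)) ^ 2)) →
      ∀ j : ℕ, 1 ≤ j →
        0 < lam ^ d * maternHat d ν (lam * Real.sqrt (∑ i, ((k j i : ℝ)) ^ 2) / (2 * ℓ)) ∧
        lam ^ d * maternHat d ν (lam * Real.sqrt (∑ i, ((k j i : ℝ)) ^ 2) / (2 * ℓ))
          ≤ C * lam ^ (-(2 * ν)) * (ν * ℓ ^ 2) ^ (ν + (d : ℝ) / 2) *
              ((j + 1 : ℕ) : ℝ) ^ (-(1 + 2 * ν / d)) := by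
  refine ⟨(2 * π * (d + 1)) ^ ((d : ℝ) / 2) * (2 * 121) ^ (121 + (d : ℝ) / 2), by positivity,
    ?_⟩
  intro ν hν lam hlam0 hlam1 ℓ hℓ k hk _ hmono j _
  set r := √(∑ i, (k j i : ℝ) ^ 2)
  set N : ℝ := ((j + 1 : ℕ) : ℝ)
  have hν0 : 0 < ν := by linarith
  have hℓ0 : 0 < ℓ := by linarith
  refine ⟨mul_pos (by positivity) (maternHat_pos d hν0 _), ?_⟩
  have hN : 0 < N := by positivity
  have hM : N ^ ((d : ℝ)⁻¹) ≤ 2 * r + 1 := by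
    calc N ^ ((d : ℝ)⁻¹) ≤ ((2 * r + 1) ^ d) ^ ((d : ℝ)⁻¹) :=
          rpow_le_rpow hN.le (succ_le_of_monotone_sqrt_sum_sq hk.injective hmono j)
            (by positivity)
      _ = 2 * r + 1 := pow_rpow_inv_natCast (by positivity) (by omega)
  have hρ : (2 * π * (lam * r / (2 * ℓ))) ^ 2 = (π * (lam / ℓ) * r) ^ 2 := by
    field_simp
  calc lam ^ d * maternHat d ν (lam * r / (2 * ℓ))
      ≤ lam ^ d * ((2 * π * (d + 1)) ^ ((d : ℝ) / 2) *
          (2 * ν / (2 * ν + (π * (lam / ℓ) * r) ^ 2)) ^ (ν + (d : ℝ) / 2)) := by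
        rw [← hρ]
        exact mul_le_mul_of_nonneg_left (maternHat_le d hν _) (by positivity)
    _ ≤ lam ^ d * ((2 * π * (d + 1)) ^ ((d : ℝ) / 2) * ((2 * 121) ^ (121 + (d : ℝ) / 2) *
          (ν / (lam / ℓ * N ^ ((d : ℝ)⁻¹)) ^ 2) ^ (ν + (d : ℝ) / 2))) := by
        gcongr
        exact rpow_two_mul_div_le hν (by positivity) (sqrt_nonneg _) (by positivity)
          ((div_le_one hℓ0).2 (by linarith)) (by positivity) hM
    _ = _ := by
        rw [mul_assoc _ (lam ^ (-(2 * ν))), mul_assoc _ _ (N ^ _),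
          rpow_decay_eq_pow_mul_rpow_div (by omega) hlam0 hℓ0 hν0 hN]
        ring
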